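/- For any nonempty set S, the relation ≤ on functional units for S is transitive: for all functional units H, H', H'' for S, if H ≤ H' and H' ≤ H'' then H ≤ H''. -/

import Mathlib

/-- Primitive instructions: plain basic `f.m`, positive test `+f.m`, negative test `-f.m`
(method names are natural numbers, there is a single focus `f`), forward jump `#l`,
backward jump `\l`, and the positive/negative termination instructions `!t` / `!f`. -/
inductive Instr : Type where
  | basic (m : ℕ)
  | postest (m : ℕ)
  | negtest (m : ℕ)
  | fjump (l : ℕ)
  | bjump (l : ℕ)
  | haltT
  | haltF
deriving DecidableEq

/-- A functional unit for a state space `S`: a finite, functional set of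
(method name, method operation) pairs, where a method operation is a total
function `S → Bool × S`. -/
structure FU (S : Type*) where
  carrier : Set (ℕ × (S → Bool × S))
  finite : carrier.Finite
  functional : ∀ {m : ℕ} {M M' : S → Bool × S},
    (m, M) ∈ carrier → (m, M') ∈ carrier → M = M'

/-- The interface of a functional unit: the set of method names occurring in it. -/
def FU.iface {S : Type*} (H : FU S) : Set ℕ := {m | ∃ M, (m, M) ∈ H.carrier}

/-- The method operation named `m` in `H` (an arbitrary fixed value if `m ∉ I(H)`). -/
noncomputable def FU.op {S : Type*} (H : FU S) (m : ℕ) (s : S) : Bool × S :=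
  letI := Classical.propDecidable
  if h : ∃ M, (m, M) ∈ H.carrier then h.choose s else (true, s)

/-- The restriction `⟨I, H⟩` of a functional unit to a set `I` of method names. -/
def FU.restrict {S : Type*} (H : FU S) (I : Set ℕ) : FU S where
  carrier := {p ∈ H.carrier | p.1 ∈ I}
  finite := H.finite.subset (Set.sep_subset _ _)
  functional := fun hM hM' => H.functional hM.1 hM'.1

/-- The method names used by an instruction all belong to `I`. -/
def Instr.namesIn (I : Set ℕ) : Instr → Prop
  | .basic m => m ∈ I
  | .postest m => m ∈ I
  | .negtest m => m ∈ I
  | _ => True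

/-- An instruction sequence over a set `I` of method names: a finite nonempty list of
primitive instructions whose method names belong to `I`. -/
def InstrSeqOver (I : Set ℕ) (x : List Instr) : Prop :=
  x ≠ [] ∧ ∀ u ∈ x, u.namesIn I

/-- `Exec H x i s b s'` : execution of the instruction sequence `x` on the functional
unit `H`, from (0-based) position `i` in state `s`, terminates delivering the Boolean
value `b` with final state `s'`.  (Position `i` here corresponds to the 1-based
position `i+1`; positions outside the sequence, jumps `#0`/`\0`, and infinite
executions admit no derivation, i.e. execution does not terminate.) -/
inductive Exec {S : Type*} (H : FU S) (x : List Instr) : ℕ → S → Bool → S → Prop where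
  | basic {i : ℕ} {s : S} {b : Bool} {s' : S} (m : ℕ)
      (hu : x[i]? = some (Instr.basic m))
      (h : Exec H x (i + 1) (H.op m s).2 b s') : Exec H x i s b s'
  | posT {i : ℕ} {s : S} {b : Bool} {s' : S} (m : ℕ)
      (hu : x[i]? = some (Instr.postest m)) (hr : (H.op m s).1 = true)
      (h : Exec H x (i + 1) (H.op m s).2 b s') : Exec H x i s b s'
  | posF {i : ℕ} {s : S} {b : Bool} {s' : S} (m : ℕ)
      (hu : x[i]? = some (Instr.postest m)) (hr : (H.op m s).1 = false)
      (h : Exec H x (i + 2) (H.op m s).2 b s') : Exec H x i s b s'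
  | negT {i : ℕ} {s : S} {b : Bool} {s' : S} (m : ℕ)
      (hu : x[i]? = some (Instr.negtest m)) (hr : (H.op m s).1 = true)
      (h : Exec H x (i + 2) (H.op m s).2 b s') : Exec H x i s b s'
  | negF {i : ℕ} {s : S} {b : Bool} {s' : S} (m : ℕ)
      (hu : x[i]? = some (Instr.negtest m)) (hr : (H.op m s).1 = false)
      (h : Exec H x (i + 1) (H.op m s).2 b s') : Exec H x i s b s'
  | fjump {i : ℕ} {s : S} {b : Bool} {s' : S} (l : ℕ)
      (hu : x[i]? = some (Instr.fjump l))
      (h : Exec H x (i + l) s b s') : Exec H x i s b s'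
  | bjump {i : ℕ} {s : S} {b : Bool} {s' : S} (l : ℕ)
      (hu : x[i]? = some (Instr.bjump l)) (hl : l ≤ i)
      (h : Exec H x (i - l) s b s') : Exec H x i s b s'
  | haltT {i : ℕ} {s : S} (hu : x[i]? = some Instr.haltT) : Exec H x i s true s
  | haltF {i : ℕ} {s : S} (hu : x[i]? = some Instr.haltF) : Exec H x i s false s

/-- `M` is a derived method operation of `H`: there is an instruction sequence `x`
over `I(H)` whose produced partial method operation `⌈x⌉_H` is total and equals `M`. -/
def DerivedOp {S : Type*} (H : FU S) (M : S → Bool × S) : Prop :=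
  ∃ x : List Instr, InstrSeqOver H.iface x ∧ ∀ s, Exec H x 0 s (M s).1 (M s).2

/-- `H ≤ H'` : every method operation of `H` is a derived method operation of `H'`. -/
def FU.le {S : Type*} (H H' : FU S) : Prop :=
  ∀ m M, (m, M) ∈ H.carrier → DerivedOp H' M

/-- `H ≡ H'` : `H ≤ H'` and `H' ≤ H`. -/
def FU.equiv {S : Type*} (H H' : FU S) : Prop := FU.le H H' ∧ FU.le H' H

/-- A method operation on ℕ is computable if both its components are. -/
def ComputableMO (M : ℕ → Bool × ℕ) : Prop :=
  Computable (fun n => (M n).1) ∧ Computable (fun n => (M n).2)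

/-- A functional unit for ℕ is computable if all its method operations are. -/
def ComputableFU (H : FU ℕ) : Prop :=
  ∀ m M, (m, M) ∈ H.carrier → ComputableMO M

/-!
If `H ≤ H'` and `H' ≤ H''`, every method of `H` is computed by an instruction sequence `x` over
`I(H')`, and every method `m` of `H'` by an instruction sequence `P m` over `I(H'')`.
Inlining turns `x` into an instruction sequence over `I(H'')`: each instruction of `x` becomes a
block of `N` instructions, `N` bounding the lengths of all `P m`; a call of `m` becomes a copy of
`P m` whose termination instructions jump to the block of the instruction at which `x` continues
after the reply, and the jumps of `x` are scaled by `N`.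
-/

namespace Instr

/-- `q` is the absolute position of the instruction, `tT` and `tF` are absolute jump targets. -/
def retarget (tT tF q : ℕ) : Instr → Instr
  | .haltT => .fjump (tT - q)
  | .haltF => .fjump (tF - q)
  | w => w

theorem namesIn_retarget {I : Set ℕ} (tT tF q : ℕ) {w : Instr} (h : w.namesIn I) :
    (retarget tT tF q w).namesIn I := by
  cases w <;> exact h

end Instr

/-- Offsets `k` beyond the end of `p` are padding. -/
def inlineCell (p : List Instr) (o tT tF k : ℕ) : Instr :=
  (p[k]?.map (Instr.retarget tT tF (o + k))).getD .haltT

/-- Only offset `0` of a block coming from a jump or termination instruction is ever reached. -/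
def inlineBlock (P : ℕ → List Instr) (N j : ℕ) : Instr → ℕ → Instr
  | .basic m => inlineCell (P m) (N * j) (N * (j + 1)) (N * (j + 1))
  | .postest m => inlineCell (P m) (N * j) (N * (j + 1)) (N * (j + 2))
  | .negtest m => inlineCell (P m) (N * j) (N * (j + 2)) (N * (j + 1))
  | .fjump l => fun _ => .fjump (N * l)
  | .bjump l => fun _ => .bjump (N * l)
  | .haltT => fun _ => .haltT
  | .haltF => fun _ => .haltF

def inlineAt (P : ℕ → List Instr) (N : ℕ) (x : List Instr) (q : ℕ) : Instr :=
  match x[q / N]? with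
  | some u => inlineBlock P N (q / N) u (q % N)
  | none => .haltT

def inlineProg (P : ℕ → List Instr) (N : ℕ) (x : List Instr) : List Instr :=
  (List.range (N * x.length)).map (inlineAt P N x)

section Inline

variable {P : ℕ → List Instr} {N : ℕ} {x : List Instr}

theorem namesIn_inlineCell {I : Set ℕ} {p : List Instr} (hp : ∀ w ∈ p, w.namesIn I)
    (o tT tF k : ℕ) : (inlineCell p o tT tF k).namesIn I := by
  unfold inlineCell
  cases hk : p[k]? with
  | none => trivial
  | some w => exact Instr.namesIn_retarget _ _ _ (hp w (List.mem_of_getElem? hk))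

theorem getElem?_inlineProg {j k : ℕ} {u : Instr} (hu : x[j]? = some u) (hk : k < N) :
    (inlineProg P N x)[N * j + k]? = some (inlineBlock P N j u k) := by
  have hj : j < x.length := (List.getElem?_eq_some_iff.mp hu).1
  have hlt : N * j + k < N * x.length :=
    calc N * j + k < N * (j + 1) := by rw [Nat.mul_succ]; omega
      _ ≤ N * x.length := Nat.mul_le_mul_left N hj
  have hpos : 0 < N := by omega
  simp [inlineProg, List.getElem?_range hlt, inlineAt, Nat.mul_add_div hpos, Nat.div_eq_of_lt hk,
    Nat.mod_eq_of_lt hk, hu]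

theorem instrSeqOver_inlineProg {I I' : Set ℕ} (hN : 0 < N)
    (hx : InstrSeqOver I x) (hP : ∀ m ∈ I, ∀ w ∈ P m, w.namesIn I') :
    InstrSeqOver I' (inlineProg P N x) := by
  refine ⟨?_, ?_⟩
  · simp [inlineProg, hN.ne', hx.1]
  · simp only [inlineProg, List.mem_map, List.mem_range, forall_exists_index, and_imp]
    rintro _ q - rfl
    unfold inlineAt
    split
    case h_2 => trivial
    case h_1 u hu =>
      have hu' := hx.2 u (List.mem_of_getElem? hu)
      cases u <;> first | trivial | exact namesIn_inlineCell (hP _ hu') ..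

end Inline

section Exec

variable {S : Type*} {H : FU S}

theorem Exec.embed {p big : List Instr} {o tT tF : ℕ}
    (hcopy : ∀ k < p.length, big[o + k]? = some (inlineCell p o tT tF k))
    (hT : o + p.length ≤ tT) (hF : o + p.length ≤ tF)
    {i : ℕ} {s s₁ : S} {r : Bool} (hp : Exec H p i s r s₁)
    {b : Bool} {s' : S} (hcont : Exec H big (if r then tT else tF) s₁ b s') :
    Exec H big (o + i) s b s' := by
  have hlook {k : ℕ} {w : Instr} (hw : p[k]? = some w) :
      big[o + k]? = some (Instr.retarget tT tF (o + k) w) := by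
    simpa [inlineCell, hw] using hcopy k (List.getElem?_eq_some_iff.mp hw).1
  induction hp with
  | basic m hu _ ih => exact .basic m (hlook hu) (Nat.add_assoc .. ▸ ih hcont)
  | posT m hu hr _ ih => exact .posT m (hlook hu) hr (Nat.add_assoc .. ▸ ih hcont)
  | posF m hu hr _ ih => exact .posF m (hlook hu) hr (Nat.add_assoc .. ▸ ih hcont)
  | negT m hu hr _ ih => exact .negT m (hlook hu) hr (Nat.add_assoc .. ▸ ih hcont)
  | negF m hu hr _ ih => exact .negF m (hlook hu) hr (Nat.add_assoc .. ▸ ih hcont)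
  | fjump l hu _ ih => exact .fjump l (hlook hu) (Nat.add_assoc .. ▸ ih hcont)
  | bjump l hu hl _ ih =>
    exact .bjump l (hlook hu) (by omega) (Nat.add_sub_assoc hl _ ▸ ih hcont)
  | @haltT i _ hu =>
    have hi := (List.getElem?_eq_some_iff.mp hu).1
    refine .fjump _ (hlook hu) ?_
    rwa [Nat.add_sub_cancel' (by omega)]
  | @haltF i _ hu =>
    have hi := (List.getElem?_eq_some_iff.mp hu).1
    refine .fjump _ (hlook hu) ?_
    rwa [Nat.add_sub_cancel' (by omega)]

theorem Exec.embed_block {p big : List Instr} {N j dT dF : ℕ} (hdT : 0 < dT) (hdF : 0 < dF)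
    (hpN : p.length ≤ N)
    (hcopy : ∀ k < N,
      big[N * j + k]? = some (inlineCell p (N * j) (N * (j + dT)) (N * (j + dF)) k))
    {s s₁ : S} {r : Bool} (hp : Exec H p 0 s r s₁)
    {b : Bool} {s' : S} (hcont : Exec H big (N * (j + if r then dT else dF)) s₁ b s') :
    Exec H big (N * j) s b s' := by
  have hstep (d : ℕ) (hd : 0 < d) : N * j + p.length ≤ N * (j + d) := by
    nlinarith
  refine Exec.embed (fun k hk => hcopy k (by omega)) (hstep dT hdT) (hstep dF hdF) hp ?_
  cases r <;> simpa using hcont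

end Exec

theorem Exec.inlineProg {S : Type*} {H' H'' : FU S} {I : Set ℕ} {P : ℕ → List Instr} {N : ℕ}
    {x : List Instr} (hN : 0 < N) (hPN : ∀ m ∈ I, (P m).length ≤ N)
    (hx : ∀ u ∈ x, u.namesIn I)
    (hP : ∀ m ∈ I, ∀ s, Exec H'' (P m) 0 s (H'.op m s).1 (H'.op m s).2)
    {i : ℕ} {s : S} {b : Bool} {s' : S} (h : Exec H' x i s b s') :
    Exec H'' (inlineProg P N x) (N * i) s b s' := by
  have hname {i : ℕ} {u : Instr} (hu : x[i]? = some u) : u.namesIn I :=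
    hx u (List.mem_of_getElem? hu)
  have hcopy {i : ℕ} {u : Instr} (hu : x[i]? = some u) (k : ℕ) (hk : k < N) :=
    getElem?_inlineProg (P := P) hu hk
  induction h with
  | basic m hu _ ih =>
    exact .embed_block one_pos one_pos (hPN m (hname hu)) (hcopy hu) (hP m (hname hu) _)
      (by simpa using ih)
  | posT m hu hr _ ih =>
    exact .embed_block one_pos two_pos (hPN m (hname hu)) (hcopy hu) (hP m (hname hu) _)
      (by simpa [hr] using ih)
  | posF m hu hr _ ih =>
    exact .embed_block one_pos two_pos (hPN m (hname hu)) (hcopy hu) (hP m (hname hu) _)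
      (by simpa [hr] using ih)
  | negT m hu hr _ ih =>
    exact .embed_block two_pos one_pos (hPN m (hname hu)) (hcopy hu) (hP m (hname hu) _)
      (by simpa [hr] using ih)
  | negF m hu hr _ ih =>
    exact .embed_block two_pos one_pos (hPN m (hname hu)) (hcopy hu) (hP m (hname hu) _)
      (by simpa [hr] using ih)
  | fjump l hu _ ih => exact .fjump _ (hcopy hu 0 hN) (Nat.mul_add .. ▸ ih)
  | bjump l hu hl _ ih =>
    exact .bjump _ (hcopy hu 0 hN) (Nat.mul_le_mul_left N hl) (Nat.mul_sub .. ▸ ih)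
  | haltT hu => exact .haltT (hcopy hu 0 hN)
  | haltF hu => exact .haltF (hcopy hu 0 hN)

theorem FU.op_eq_of_mem {S : Type*} {H : FU S} {m : ℕ} {M : S → Bool × S}
    (h : (m, M) ∈ H.carrier) : H.op m = M := by
  have hex : ∃ M, (m, M) ∈ H.carrier := ⟨M, h⟩
  funext s
  simp only [FU.op, dif_pos hex, H.functional hex.choose_spec h]

theorem FU.iface_finite {S : Type*} (H : FU S) : H.iface.Finite :=
  (H.finite.image Prod.fst).subset fun m ⟨M, hM⟩ => ⟨(m, M), hM, rfl⟩

theorem DerivedOp.trans {S : Type*} {H' H'' : FU S}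
    (h : ∀ m ∈ H'.iface, DerivedOp H'' (H'.op m)) {M : S → Bool × S} (hM : DerivedOp H' M) :
    DerivedOp H'' M := by
  obtain ⟨x, hx, hxM⟩ := hM
  choose! P hPseq hPexec using h
  obtain ⟨N, hN⟩ := (H'.iface_finite.image fun m => (P m).length).bddAbove
  refine ⟨inlineProg P (N + 1) x,
    instrSeqOver_inlineProg N.succ_pos hx fun m hm => (hPseq m hm).2, fun s => ?_⟩
  simpa using Exec.inlineProg N.succ_pos (fun m hm => (hN ⟨m, hm, rfl⟩).trans N.le_succ) hx.2
    hPexec (hxM s)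

theorem le_trans_fu_general {S : Type*} (H H' H'' : FU S)
    (h1 : FU.le H H') (h2 : FU.le H' H'') : FU.le H H'' :=
  fun m M hM => (h1 m M hM).trans fun n ⟨M', hM'⟩ => H'.op_eq_of_mem hM' ▸ h2 n M' hM'

/-- For any nonempty set `S`, the relation `≤` on functional units for `S` is
transitive. -/
theorem le_trans_fu {S : Type*} [Nonempty S] (H H' H'' : FU S)
    (h1 : FU.le H H') (h2 : FU.le H' H'') : FU.le H H'' :=
  le_trans_fu_general H H' H'' h1 h2
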